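/- arXiv:1609.01886 — 4 statements merged into one kernel-verified Lean document; each statement's English description precedes it below -/
import Mathlib

section
/- Suppose C ⊆ Q^m has minimum distance δ ≥ 3 and {J_1,...,J_ℓ} is a partition of {1,...,m}. Fix i, let ν̄ be a vertex of Q^{J_i} with d(ν̄, π_{J_i}(C)) = 2, and let α ∈ C attain this distance, i.e., d(ν̄, π_{J_i}(α)) = 2. Define ν̂ ∈ Q^m by ν̂_u = ν̄_u for u ∈ J_i and ν̂_u = α_u otherwise. Then d(ν̂, C) = 2. -/
/-! Restricting to the block `J i` can only decrease Hamming distance, so `nuhat`, whose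
restriction is `nubar`, is at distance at least 2 from every codeword; and `nuhat` agrees with `α`
off `J i`, so its distance to `α` is the distance of the restrictions, namely 2. -/

open Finset

section Restrict

variable {ι β : Type*} [DecidableEq β] (s : Finset ι)

theorem hammingDist_restrict (x y : ι → β) :
    hammingDist (fun j : s => x j) (fun j : s => y j) = #{u ∈ s | x u ≠ y u} := by
  rw [hammingDist, ← Finset.card_map (Function.Embedding.subtype _)]
  congr 1
  ext u
  simp [and_comm]

theorem hammingDist_restrict_le [Fintype ι] (x y : ι → β) :
    hammingDist (fun j : s => x j) (fun j : s => y j) ≤ hammingDist x y := by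
  rw [hammingDist_restrict, hammingDist]
  exact card_le_card (filter_subset_filter _ (subset_univ s))

theorem hammingDist_restrict_of_eqOn_compl [Fintype ι] {x y : ι → β} (h : ∀ u ∉ s, x u = y u) :
    hammingDist (fun j : s => x j) (fun j : s => y j) = hammingDist x y := by
  rw [hammingDist_restrict, hammingDist]
  congr 1
  ext u
  simp only [mem_filter, mem_univ, true_and, and_iff_right_iff_imp]
  exact fun hne => by_contra fun hu => hne (h u hu)

end Restrict

theorem stmt_6_general (m q ℓ : ℕ) (C : Set (Fin m → Fin q))
    (J : Fin ℓ → Finset (Fin m))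
    (i : Fin ℓ) (nubar : {u // u ∈ J i} → Fin q)
    (hd2 : sInf {n | ∃ c ∈ C, hammingDist nubar (fun j : {u // u ∈ J i} => c j) = n} = 2)
    (α : Fin m → Fin q) (hα : α ∈ C)
    (hαd : hammingDist nubar (fun j : {u // u ∈ J i} => α j) = 2)
    (nuhat : Fin m → Fin q)
    (hnuhat : ∀ u : Fin m, nuhat u = if hu : u ∈ J i then nubar ⟨u, hu⟩ else α u) :
    sInf {n | ∃ c ∈ C, hammingDist nuhat c = n} = 2 := by
  have hrestr : (fun j : {u // u ∈ J i} => nuhat j) = nubar := by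
    funext j
    simp [hnuhat, j.2]
  have hαhat : hammingDist nuhat α = 2 := by
    rw [← hammingDist_restrict_of_eqOn_compl (J i) fun u hu => by simp [hnuhat, hu], hrestr, hαd]
  refine IsLeast.csInf_eq ⟨⟨α, hα, hαhat⟩, ?_⟩
  rintro _ ⟨c, hc, rfl⟩
  calc 2 ≤ hammingDist nubar (fun j : {u // u ∈ J i} => c j) := hd2 ▸ Nat.sInf_le ⟨c, hc, rfl⟩
    _ ≤ hammingDist nuhat c := hrestr ▸ hammingDist_restrict_le (J i) nuhat c

theorem stmt_6 (m q ℓ : ℕ) (C : Set (Fin m → Fin q))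
    (J : Fin ℓ → Finset (Fin m)) (hpart : ∀ u : Fin m, ∃! i : Fin ℓ, u ∈ J i)
    (hδ : ∀ a ∈ C, ∀ b ∈ C, a ≠ b → 3 ≤ hammingDist a b)
    (i : Fin ℓ) (nubar : {u // u ∈ J i} → Fin q)
    (hd2 : sInf {n | ∃ c ∈ C, hammingDist nubar (fun j : {u // u ∈ J i} => c j) = n} = 2)
    (α : Fin m → Fin q) (hα : α ∈ C)
    (hαd : hammingDist nubar (fun j : {u // u ∈ J i} => α j) = 2)
    (nuhat : Fin m → Fin q)
    (hnuhat : ∀ u : Fin m, nuhat u = if hu : u ∈ J i then nubar ⟨u, hu⟩ else α u) :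
    sInf {n | ∃ c ∈ C, hammingDist nuhat c = n} = 2 :=
  stmt_6_general m q ℓ C J i nubar hd2 α hα hαd nuhat hnuhat
end

section
/- Let m ≥ 4 and q > m, and let Inj(m,q) ⊆ Q^m be the set of m-tuples with pairwise distinct entries. Then the vertices μ = (1,1,1,4,5,...,m) and ν = (1,1,3,3,5,6,...,m) both satisfy d(μ, Inj(m,q)) = 2 = d(ν, Inj(m,q)), but Num(μ) ≠ Num(ν); consequently no subgroup of Diag_m(S_q) ⋊ S_m can map μ to ν. -/
/-!
An injective `x` can agree with `α` only on a set where `α` is injective, so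
`d(α, x) ≥ m - |image α|`. Both μ and ν take `m - 2` values, and the injective tuple
`Fin.castLE` differs from each in just two coordinates, so both distances are 2. Num tells
them apart at multiplicity 3 (μ has a symbol of multiplicity 3, ν has none), and Num is
invariant under `Diag_m(S_q) ⋊ S_m`.
-/

/-- `numCount α p` is the number of symbols appearing exactly `p` times in `α`,
encoding `Num(α)`. -/
def numCount {m q : ℕ} (α : Fin m → Fin q) (p : ℕ) : ℕ :=
  (Finset.univ.filter (fun a : Fin q =>
    (Finset.univ.filter (fun i : Fin m => α i = a)).card = p)).card

/-- Distance from a vertex to a code. -/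
noncomputable def distToCode {m q : ℕ} (C : Set (Fin m → Fin q)) (ν : Fin m → Fin q) : ℕ :=
  sInf {n | ∃ c ∈ C, hammingDist ν c = n}

open Finset

section Hamming

variable {ι β : Type*} [Fintype ι] [DecidableEq β]

theorem hammingDist_le_card_of_eqOn_compl {x y : ι → β} (S : Finset ι)
    (h : ∀ i ∉ S, x i = y i) : hammingDist x y ≤ #S :=
  card_le_card fun i hi => by
    by_contra hiS
    exact (mem_filter.mp hi).2 (h i hiS)

theorem card_sub_card_image_le_hammingDist {α x : ι → β} (hx : Function.Injective x) :
    Fintype.card ι - #(univ.image α) ≤ hammingDist α x := by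
  classical
  have hagree : #{i | α i = x i} ≤ #(univ.image α) :=
    card_le_card_of_injOn α (fun i _ => mem_coe.mpr (mem_image_of_mem α (mem_univ i)))
      fun i hi j hj hij => hx <| by
        rw [← (mem_filter.mp hi).2, ← (mem_filter.mp hj).2, hij]
  have hsplit := card_filter_add_card_filter_not (s := univ) (fun i => α i = x i)
  have hdist : hammingDist α x = #{i | ¬α i = x i} := rfl
  rw [card_univ] at hsplit
  omega

theorem card_image_le_card_sub_of_forall_exists_eq [DecidableEq ι] (α : ι → β) (S : Finset ι)
    (h : ∀ i ∈ S, ∃ j ∉ S, α j = α i) : #(univ.image α) ≤ Fintype.card ι - #S := by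
  rw [← card_compl]
  refine (card_le_card (t := Sᶜ.image α) fun b hb => ?_).trans card_image_le
  obtain ⟨i, -, rfl⟩ := mem_image.mp hb
  by_cases hi : i ∈ S
  · obtain ⟨j, hj, hji⟩ := h i hi
    exact mem_image.mpr ⟨j, mem_compl.mpr hj, hji⟩
  · exact mem_image_of_mem α (mem_compl.mpr hi)

theorem card_le_hammingDist_of_forall_exists_eq {α x : ι → β} (hx : Function.Injective x)
    (S : Finset ι) (h : ∀ i ∈ S, ∃ j ∉ S, α j = α i) : #S ≤ hammingDist α x := by
  classical
  have := card_image_le_card_sub_of_forall_exists_eq α S h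
  have := card_sub_card_image_le_hammingDist (α := α) hx
  have := card_le_univ S
  omega

end Hamming

theorem distToCode_eq_of_mem {m q : ℕ} {C : Set (Fin m → Fin q)} {α c : Fin m → Fin q}
    {n : ℕ} (hc : c ∈ C) (hαc : hammingDist α c ≤ n)
    (hC : ∀ x ∈ C, n ≤ hammingDist α x) : distToCode C α = n := by
  unfold distToCode
  have hmem : hammingDist α c ∈ {n | ∃ x ∈ C, hammingDist α x = n} := ⟨c, hc, rfl⟩
  refine le_antisymm ((Nat.sInf_le hmem).trans hαc) (le_csInf ⟨_, hmem⟩ ?_)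
  rintro _ ⟨x, hx, rfl⟩
  exact hC x hx

theorem distToCode_setOf_injective_eq_card {m q : ℕ} {α c : Fin m → Fin q}
    (hc : Function.Injective c) (S : Finset (Fin m)) (hαc : ∀ i ∉ S, α i = c i)
    (hα : ∀ i ∈ S, ∃ j ∉ S, α j = α i) :
    distToCode {x | Function.Injective x} α = #S :=
  distToCode_eq_of_mem hc (hammingDist_le_card_of_eqOn_compl S hαc)
    fun _ hx => card_le_hammingDist_of_forall_exists_eq hx S hα

theorem card_filter_perm_comp_eq {m q : ℕ} (α : Fin m → Fin q) (h : Equiv.Perm (Fin q))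
    (σ : Equiv.Perm (Fin m)) (a : Fin q) :
    #{i | h (α (σ⁻¹ i)) = a} = #{i | α i = h⁻¹ a} :=
  card_equiv σ.symm fun i => by simp [Equiv.eq_symm_apply]

theorem numCount_perm_comp {m q : ℕ} (α : Fin m → Fin q) (h : Equiv.Perm (Fin q))
    (σ : Equiv.Perm (Fin m)) : numCount (fun i => h (α (σ⁻¹ i))) = numCount α := by
  funext p
  unfold numCount
  simp_rw [card_filter_perm_comp_eq]
  exact card_equiv h.symm fun a => by simp

section Vertices

variable {m q : ℕ}

theorem distToCode_triple_eq_two (hm : 3 ≤ m) (hq : m ≤ q) {μ : Fin m → Fin q}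
    (hμ : ∀ i : Fin m, (μ i : ℕ) = if i.val < 3 then 0 else i.val) :
    distToCode {x | Function.Injective x} μ = 2 := by
  have := distToCode_setOf_injective_eq_card (α := μ) (Fin.castLE_injective hq)
    {⟨1, by omega⟩, ⟨2, by omega⟩} (fun i hi => ?_) ?_
  · rwa [card_pair (by simp)] at this
  · simp only [mem_insert, mem_singleton, Fin.ext_iff] at hi
    rw [Fin.ext_iff, hμ, Fin.val_castLE]
    split_ifs <;> omega
  · simp only [mem_insert, mem_singleton]
    rintro i (rfl | rfl) <;> exact ⟨⟨0, by omega⟩, by simp, Fin.ext (by simp [hμ])⟩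

theorem distToCode_twoPairs_eq_two (hm : 4 ≤ m) (hq : m ≤ q) {ν : Fin m → Fin q}
    (hν : ∀ i : Fin m, (ν i : ℕ) = if i.val < 2 then 0 else if i.val < 4 then 2 else i.val) :
    distToCode {x | Function.Injective x} ν = 2 := by
  have := distToCode_setOf_injective_eq_card (α := ν) (Fin.castLE_injective hq)
    {⟨1, by omega⟩, ⟨3, by omega⟩} (fun i hi => ?_) ?_
  · rwa [card_pair (by simp)] at this
  · simp only [mem_insert, mem_singleton, Fin.ext_iff] at hi
    rw [Fin.ext_iff, hν, Fin.val_castLE]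
    split_ifs <;> omega
  · simp only [mem_insert, mem_singleton]
    rintro i (rfl | rfl)
    · exact ⟨⟨0, by omega⟩, by simp, Fin.ext (by simp [hν])⟩
    · exact ⟨⟨2, by omega⟩, by simp, Fin.ext (by simp [hν])⟩

theorem numCount_triple_three_ne_zero (hm : 3 ≤ m) {μ : Fin m → Fin q}
    (hμ : ∀ i : Fin m, (μ i : ℕ) = if i.val < 3 then 0 else i.val) :
    numCount μ 3 ≠ 0 := by
  have hfiber : #{i | μ i = μ ⟨0, by omega⟩} = 3 := by
    rw [← min_eq_right hm, ← Fin.card_filter_val_lt]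
    congr 1
    ext i
    simp only [mem_filter, mem_univ, true_and, Fin.ext_iff, hμ]
    split_ifs <;> omega
  exact card_ne_zero.mpr ⟨_, mem_filter.mpr ⟨mem_univ _, hfiber⟩⟩

theorem numCount_twoPairs_three_eq_zero {ν : Fin m → Fin q}
    (hν : ∀ i : Fin m, (ν i : ℕ) = if i.val < 2 then 0 else if i.val < 4 then 2 else i.val) :
    numCount ν 3 = 0 := by
  -- each symbol `a` occurs in `ν` only at positions `a` and `a + 1`
  refine card_eq_zero.mpr (filter_eq_empty_iff.mpr fun a _ => (Nat.lt_succ_of_le ?_).ne)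
  refine (card_le_card_of_injOn Fin.val (t := {a.val, a.val + 1}) (fun i hi => ?_)
    Fin.val_injective.injOn).trans card_le_two
  rw [mem_coe, mem_filter] at hi
  simp only [coe_insert, coe_singleton, Set.mem_insert_iff, Set.mem_singleton_iff]
  rw [← hi.2, hν]
  split_ifs <;> omega

end Vertices

theorem stmt_7 (m q : ℕ) (hm : 4 ≤ m) (hq : m < q)
    (Inj : Set (Fin m → Fin q)) (hInj : Inj = {α | Function.Injective α})
    (μ ν : Fin m → Fin q)
    -- μ = (1,1,1,4,5,…,m), written with 0-based symbols
    (hμ : ∀ i : Fin m, μ i = if i.val < 3 then ⟨0, by omega⟩ else ⟨i.val, by omega⟩)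
    -- ν = (1,1,3,3,5,6,…,m), written with 0-based symbols
    (hν : ∀ i : Fin m, ν i = if i.val < 2 then ⟨0, by omega⟩
      else if i.val < 4 then ⟨2, by omega⟩ else ⟨i.val, by omega⟩) :
    distToCode Inj μ = 2 ∧ distToCode Inj ν = 2 ∧ numCount μ ≠ numCount ν ∧
    ∀ (h : Equiv.Perm (Fin q)) (σ : Equiv.Perm (Fin m)),
      (fun i => h (μ (σ⁻¹ i))) ≠ ν := by
  subst hInj
  have hμ' : ∀ i : Fin m, (μ i : ℕ) = if i.val < 3 then 0 else i.val := fun i => by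
    rw [hμ i]; split_ifs <;> rfl
  have hν' : ∀ i : Fin m, (ν i : ℕ) =
      if i.val < 2 then 0 else if i.val < 4 then 2 else i.val := fun i => by
    rw [hν i]; split_ifs <;> rfl
  have hNum : numCount μ ≠ numCount ν := fun h => numCount_triple_three_ne_zero (by omega) hμ'
    (congrFun h 3 ▸ numCount_twoPairs_three_eq_zero hν')
  refine ⟨distToCode_triple_eq_two (by omega) hq.le hμ',
    distToCode_twoPairs_eq_two hm hq.le hν', hNum, fun h σ hμν => hNum ?_⟩
  rw [← hμν, numCount_perm_comp]
end

section
/- Let q ≥ 3, m > q, and C = Rep(m,q). Then μ = (2,2,1,...,1) and ν = (2,3,1,...,1) both lie in C_2 = {α : d(α,C) = 2}, while Num(μ) = {(m−2,1),(2,1)} ≠ {(m−2,1),(1,2)} = Num(ν); hence no group X ≤ Diag_m(S_q) ⋊ S_m acts transitively on C_2, so Rep(m,q) is not diagonally (X,2)-neighbour transitive for any such X. -/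
lemma two_le_card {α : Type*} [DecidableEq α] {s : Finset α} {x y : α}
    (hxy : x ≠ y) (hx : x ∈ s) (hy : y ∈ s) : 2 ≤ s.card := by
  have h := Finset.card_le_card (Finset.insert_subset hx (Finset.singleton_subset_iff.2 hy))
  rwa [Finset.card_pair hxy] at h

theorem stmt_8 (m q : ℕ) (hq : 3 ≤ q) (hm : q < m)
    (C : Set (Fin m → Fin q)) (hC : C = {α | ∃ a : Fin q, α = fun _ => a})
    (μ ν : Fin m → Fin q)
    -- μ = (2,2,1,…,1), with 0-based symbols
    (hμ : ∀ i : Fin m, μ i = if i.val < 2 then ⟨1, by omega⟩ else ⟨0, by omega⟩)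
    -- ν = (2,3,1,…,1), with 0-based symbols
    (hν : ∀ i : Fin m, ν i = if i.val = 0 then ⟨1, by omega⟩
      else if i.val = 1 then ⟨2, by omega⟩ else ⟨0, by omega⟩) :
    distToCode C μ = 2 ∧ distToCode C ν = 2 ∧ numCount μ ≠ numCount ν ∧
    -- no element of Diag_m(S_q) ⋊ S_m maps μ to ν, so no subgroup X of it
    -- is transitive on C₂
    ∀ (h : Equiv.Perm (Fin q)) (σ : Equiv.Perm (Fin m)),
      (fun i => h (μ (σ⁻¹ i))) ≠ ν := by
  have hm4 : 4 ≤ m := by omega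
  set i0 : Fin m := ⟨0, by omega⟩
  set i1 : Fin m := ⟨1, by omega⟩
  set i2 : Fin m := ⟨2, by omega⟩
  set i3 : Fin m := ⟨3, by omega⟩
  -- fibers of μ never have cardinality 1
  have hμfib : ∀ b : Fin q, (Finset.univ.filter (fun i : Fin m => μ i = b)).card ≠ 1 := by
    intro b
    by_cases hb1 : b.val = 1
    · have h0 : i0 ∈ Finset.univ.filter (fun i : Fin m => μ i = b) := by
        simp [hμ, i0, Fin.ext_iff, hb1]
      have h1 : i1 ∈ Finset.univ.filter (fun i : Fin m => μ i = b) := by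
        simp [hμ, i1, Fin.ext_iff, hb1]
      have := two_le_card (show i0 ≠ i1 by simp [i0, i1, Fin.ext_iff]) h0 h1
      omega
    · by_cases hb0 : b.val = 0
      · have h0 : i2 ∈ Finset.univ.filter (fun i : Fin m => μ i = b) := by
          simp [hμ, i2, Fin.ext_iff, hb0]
        have h1 : i3 ∈ Finset.univ.filter (fun i : Fin m => μ i = b) := by
          simp [hμ, i3, Fin.ext_iff, hb0]
        have := two_le_card (show i2 ≠ i3 by simp [i2, i3, Fin.ext_iff]) h0 h1
        omega
      · have : Finset.univ.filter (fun i : Fin m => μ i = b) = ∅ := by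
          apply Finset.filter_eq_empty_iff.2
          intro i _
          rw [hμ i]
          split <;> (simp [Fin.ext_iff]; omega)
        simp [this]
  -- fiber of ν over ⟨1⟩ has cardinality 1
  have hνfib : (Finset.univ.filter (fun i : Fin m => ν i = ⟨1, by omega⟩)).card = 1 := by
    have : Finset.univ.filter (fun i : Fin m => ν i = ⟨1, by omega⟩) = {i0} := by
      ext i
      simp only [Finset.mem_filter, Finset.mem_univ, true_and, Finset.mem_singleton]
      rw [hν i]
      constructor
      · intro h
        by_contra hne
        have : i.val ≠ 0 := by simpa [i0, Fin.ext_iff] using hne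
        rw [if_neg this] at h
        split at h <;> simp [Fin.ext_iff] at h <;> omega
      · intro h
        subst h
        simp [i0]
    simp [this]
  refine ⟨?_, ?_, ?_, ?_⟩
  · -- distToCode C μ = 2
    have h2 : (2 : ℕ) ∈ {n | ∃ c ∈ C, hammingDist μ c = n} := by
      refine ⟨fun _ => ⟨0, by omega⟩, by rw [hC]; exact ⟨⟨0, by omega⟩, rfl⟩, ?_⟩
      show (Finset.univ.filter (fun i : Fin m => μ i ≠ ⟨0, by omega⟩)).card = 2
      have hset : Finset.univ.filter (fun i : Fin m => μ i ≠ ⟨0, by omega⟩) = {i0, i1} := by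
        ext i
        simp only [Finset.mem_filter, Finset.mem_univ, true_and, Finset.mem_insert,
          Finset.mem_singleton, hμ i]
        constructor
        · intro h
          by_cases hi : i.val < 2
          · simp [i0, i1, Fin.ext_iff]; omega
          · simp [hi] at h
        · rintro (h | h) <;> subst h <;> simp [i0, i1, Fin.ext_iff]
      rw [hset, Finset.card_pair (by simp [i0, i1, Fin.ext_iff])]
    apply le_antisymm
    · exact Nat.sInf_le h2
    · apply le_csInf ⟨2, h2⟩
      rintro n ⟨c, hc, rfl⟩
      rw [hC] at hc
      obtain ⟨a, rfl⟩ := hc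
      show 2 ≤ (Finset.univ.filter (fun i : Fin m => μ i ≠ a)).card
      by_cases ha : a.val = 1
      · refine two_le_card (show i2 ≠ i3 by simp [i2, i3, Fin.ext_iff]) ?_ ?_ <;>
          simp [hμ, i2, i3, Fin.ext_iff] <;> omega
      · refine two_le_card (show i0 ≠ i1 by simp [i0, i1, Fin.ext_iff]) ?_ ?_ <;>
          simp [hμ, i0, i1, Fin.ext_iff] <;> omega
  · -- distToCode C ν = 2
    have h2 : (2 : ℕ) ∈ {n | ∃ c ∈ C, hammingDist ν c = n} := by
      refine ⟨fun _ => ⟨0, by omega⟩, by rw [hC]; exact ⟨⟨0, by omega⟩, rfl⟩, ?_⟩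
      show (Finset.univ.filter (fun i : Fin m => ν i ≠ ⟨0, by omega⟩)).card = 2
      have hset : Finset.univ.filter (fun i : Fin m => ν i ≠ ⟨0, by omega⟩) = {i0, i1} := by
        ext i
        simp only [Finset.mem_filter, Finset.mem_univ, true_and, Finset.mem_insert,
          Finset.mem_singleton, hν i]
        constructor
        · intro h
          by_cases h0 : i.val = 0
          · simp [i0, Fin.ext_iff]; omega
          · by_cases h1 : i.val = 1
            · simp [i1, Fin.ext_iff]; omega
            · simp [h0, h1] at h
        · rintro (h | h) <;> subst h <;> simp [i0, i1, Fin.ext_iff]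
      rw [hset, Finset.card_pair (by simp [i0, i1, Fin.ext_iff])]
    apply le_antisymm
    · exact Nat.sInf_le h2
    · apply le_csInf ⟨2, h2⟩
      rintro n ⟨c, hc, rfl⟩
      rw [hC] at hc
      obtain ⟨a, rfl⟩ := hc
      show 2 ≤ (Finset.univ.filter (fun i : Fin m => ν i ≠ a)).card
      by_cases ha : a.val = 0
      · refine two_le_card (show i0 ≠ i1 by simp [i0, i1, Fin.ext_iff]) ?_ ?_ <;>
          simp [hν, i0, i1, Fin.ext_iff] <;> omega
      · refine two_le_card (show i2 ≠ i3 by simp [i2, i3, Fin.ext_iff]) ?_ ?_ <;>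
          simp [hν, i2, i3, Fin.ext_iff] <;> omega
  · -- numCount μ ≠ numCount ν
    intro h
    have h1 := congrFun h 1
    have hμ1 : numCount μ 1 = 0 := by
      unfold numCount
      rw [Finset.card_eq_zero]
      apply Finset.filter_eq_empty_iff.2
      intro b _
      exact hμfib b
    have hν1 : numCount ν 1 ≠ 0 := by
      unfold numCount
      rw [Finset.card_ne_zero]
      exact ⟨⟨1, by omega⟩, by simp [hνfib]⟩
    rw [hμ1] at h1; exact hν1 h1.symm
  · -- no diagonal element maps μ to ν
    intro h σ heq
    -- fiber of ν over ⟨1⟩ equals σ-image of fiber of μ over h⁻¹ ⟨1⟩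
    have key : (Finset.univ.filter (fun i : Fin m => ν i = ⟨1, by omega⟩)).card
        = (Finset.univ.filter (fun j : Fin m => μ j = h⁻¹ ⟨1, by omega⟩)).card := by
      apply Finset.card_bij' (fun i _ => σ⁻¹ i) (fun j _ => σ j)
      · intro i hi
        simp only [Finset.mem_filter, Finset.mem_univ, true_and] at hi ⊢
        rw [← heq] at hi
        simp only at hi
        rw [← hi]
        simp
      · intro j hj
        simp only [Finset.mem_filter, Finset.mem_univ, true_and] at hj ⊢
        rw [← heq]
        simp [hj]
      · intros; simp
      · intros; simp
    rw [hνfib] at key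
    exact hμfib _ key.symm
end

section
/- Let m be odd and let C = W([m/2],2) ⊆ {0,1}^m be the set of binary vectors of weight (m−1)/2 or (m+1)/2. Then for every s ≥ 1, C_s = {α : d(α,C) = s} is the set of vectors whose weight w satisfies min(|w−(m−1)/2|, |w−(m+1)/2|) = s, and the group generated by S_m (coordinate permutations) and the global bit-flip acts transitively on each C_s; hence C is completely transitive under Diag_m(S_2) ⋊ S_m. -/
/-- The weight of a binary vector: its number of ones. -/
def wt {m : ℕ} (α : Fin m → Fin 2) : ℕ :=
  (Finset.univ.filter (fun i : Fin m => α i = 1)).card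

/-- The bit-flip on the binary alphabet. -/
def flipBit : Fin 2 → Fin 2 := fun a => if a = 0 then 1 else 0

namespace Stmt13

def canon (m w : ℕ) : Fin m → Fin 2 := fun i => if (i : ℕ) < w then 1 else 0

lemma fin2_eq {a b : Fin 2} (h : a = 1 ↔ b = 1) : a = b := by
  fin_cases a <;> fin_cases b <;> simp_all

lemma wt_le {m : ℕ} (α : Fin m → Fin 2) : wt α ≤ m := by
  simpa [wt] using (Finset.card_filter_le Finset.univ (fun i : Fin m => α i = 1)).trans (by simp)

lemma card_filter_val (m : ℕ) (p : ℕ → Prop) [DecidablePred p] :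
    (Finset.univ.filter fun i : Fin m => p i.val).card = ((Finset.range m).filter p).card := by
  rw [Finset.card_filter, Finset.card_filter]
  exact Fin.sum_univ_eq_sum_range (fun i => if p i then 1 else 0) m

lemma wt_canon {m w : ℕ} (h : w ≤ m) : wt (canon m w) = w := by
  have : wt (canon m w) = (Finset.univ.filter fun i : Fin m => i.val < w).card := by
    unfold wt canon
    congr 1
    ext i
    by_cases hi : (i : ℕ) < w <;> simp [hi]
  rw [this, card_filter_val m (fun x => x < w)]
  have : (Finset.range m).filter (· < w) = Finset.range w := by
    ext x; simp only [Finset.mem_filter, Finset.mem_range]; omega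
  rw [this, Finset.card_range]

lemma hd_canon_le {m w₁ w₂ : ℕ} (h12 : w₁ ≤ w₂) (h : w₂ ≤ m) :
    hammingDist (canon m w₁) (canon m w₂) = w₂ - w₁ := by
  have : hammingDist (canon m w₁) (canon m w₂)
      = (Finset.univ.filter fun i : Fin m => w₁ ≤ i.val ∧ i.val < w₂).card := by
    rw [hammingDist]
    congr 1
    ext i
    unfold canon
    by_cases h1 : (i : ℕ) < w₁ <;> by_cases h2 : (i : ℕ) < w₂ <;> simp [h1, h2] <;> omega
  rw [this, card_filter_val m (fun x => w₁ ≤ x ∧ x < w₂)]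
  have : (Finset.range m).filter (fun x => w₁ ≤ x ∧ x < w₂) = Finset.Ico w₁ w₂ := by
    ext x; simp only [Finset.mem_filter, Finset.mem_range, Finset.mem_Ico]; omega
  rw [this, Nat.card_Ico]

lemma hd_canon {m w₁ w₂ : ℕ} (h1 : w₁ ≤ m) (h2 : w₂ ≤ m) :
    hammingDist (canon m w₁) (canon m w₂) = Nat.dist w₁ w₂ := by
  rcases le_total w₁ w₂ with h | h
  · rw [hd_canon_le h h2, Nat.dist_eq_sub_of_le h]
  · rw [hammingDist_comm, hd_canon_le h h1, Nat.dist_eq_sub_of_le_right h]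

lemma exists_perm {m : ℕ} (μ : Fin m → Fin 2) :
    ∃ σ : Equiv.Perm (Fin m), ∀ i, μ i = canon m (wt μ) (σ i) := by
  classical
  have hcard : Fintype.card {i : Fin m // μ i = 1} = Fintype.card {i : Fin m // canon m (wt μ) i = 1} := by
    rw [Fintype.card_subtype, Fintype.card_subtype]
    have : (Finset.univ.filter fun i : Fin m => canon m (wt μ) i = 1).card = wt (canon m (wt μ)) := rfl
    rw [this, wt_canon (wt_le μ)]
    rfl
  let e : {i : Fin m // μ i = 1} ≃ {i : Fin m // canon m (wt μ) i = 1} := Fintype.equivOfCardEq hcard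
  refine ⟨e.extendSubtype, fun i => ?_⟩
  apply fin2_eq
  constructor
  · intro h; exact e.extendSubtype_mem i h
  · intro h
    by_contra hμ
    exact e.extendSubtype_not_mem i hμ h

lemma hd_comp_perm {m : ℕ} (σ : Equiv.Perm (Fin m)) (f g : Fin m → Fin 2) :
    hammingDist (fun i => f (σ i)) (fun i => g (σ i)) = hammingDist f g := by
  rw [hammingDist, hammingDist]
  apply Finset.card_equiv σ
  intro i
  simp

lemma wt_comp_perm {m : ℕ} (σ : Equiv.Perm (Fin m)) (f : Fin m → Fin 2) :
    wt (fun i => f (σ i)) = wt f := by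
  rw [wt, wt]
  apply Finset.card_equiv σ
  intro i
  simp

lemma dist_wt_le_hd {m : ℕ} (ν c : Fin m → Fin 2) : Nat.dist (wt ν) (wt c) ≤ hammingDist ν c := by
  have h1 : wt ν ≤ wt c + hammingDist ν c := by
    rw [wt, wt, hammingDist]
    calc (Finset.univ.filter fun i : Fin m => ν i = 1).card
        ≤ ((Finset.univ.filter fun i : Fin m => c i = 1) ∪ (Finset.univ.filter fun i : Fin m => ν i ≠ c i)).card := by
          apply Finset.card_le_card
          intro i hi
          simp only [Finset.mem_filter, Finset.mem_union, Finset.mem_univ, true_and] at *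
          by_cases h : ν i = c i
          · left; rw [← h]; exact hi
          · right; exact h
      _ ≤ _ := Finset.card_union_le _ _
  have h2 : wt c ≤ wt ν + hammingDist ν c := by
    rw [wt, wt, hammingDist]
    calc (Finset.univ.filter fun i : Fin m => c i = 1).card
        ≤ ((Finset.univ.filter fun i : Fin m => ν i = 1) ∪ (Finset.univ.filter fun i : Fin m => ν i ≠ c i)).card := by
          apply Finset.card_le_card
          intro i hi
          simp only [Finset.mem_filter, Finset.mem_union, Finset.mem_univ, true_and] at *
          by_cases h : ν i = c i
          · left; rw [h]; exact hi
          · right; exact h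
      _ ≤ _ := Finset.card_union_le _ _
  simp only [Nat.dist] at *
  omega

lemma distToCode_eq {m : ℕ} (hm : Odd m) (ν : Fin m → Fin 2) :
    distToCode {α : Fin m → Fin 2 | wt α = (m - 1) / 2 ∨ wt α = (m + 1) / 2} ν
      = min (Nat.dist (wt ν) ((m - 1) / 2)) (Nat.dist (wt ν) ((m + 1) / 2)) := by
  obtain ⟨k, hk⟩ := hm
  have ha : (m - 1) / 2 = k := by omega
  have hb : (m + 1) / 2 = k + 1 := by omega
  have hkm : k ≤ m := by omega
  have hk1m : k + 1 ≤ m := by omega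
  obtain ⟨σ, hσ⟩ := exists_perm ν
  have hν : ν = fun i => canon m (wt ν) (σ i) := funext hσ
  have mem1 : Nat.dist (wt ν) ((m-1)/2) ∈ {n | ∃ c ∈ {α : Fin m → Fin 2 | wt α = (m - 1) / 2 ∨ wt α = (m + 1) / 2}, hammingDist ν c = n} := by
    refine ⟨fun i => canon m ((m-1)/2) (σ i), Or.inl ?_, ?_⟩
    · rw [wt_comp_perm, wt_canon (by omega)]
    · conv_lhs => rw [hν]
      rw [hd_comp_perm, hd_canon (wt_le ν) (by omega)]
  have mem2 : Nat.dist (wt ν) ((m+1)/2) ∈ {n | ∃ c ∈ {α : Fin m → Fin 2 | wt α = (m - 1) / 2 ∨ wt α = (m + 1) / 2}, hammingDist ν c = n} := by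
    refine ⟨fun i => canon m ((m+1)/2) (σ i), Or.inr ?_, ?_⟩
    · rw [wt_comp_perm, wt_canon (by omega)]
    · conv_lhs => rw [hν]
      rw [hd_comp_perm, hd_canon (wt_le ν) (by omega)]
  rw [distToCode]
  apply le_antisymm
  · apply le_min <;> [exact Nat.sInf_le mem1; exact Nat.sInf_le mem2]
  · apply le_csInf ⟨_, mem1⟩
    rintro n ⟨c, hc, rfl⟩
    rcases hc with h | h
    · exact le_trans (min_le_left _ _) (h ▸ dist_wt_le_hd ν c)
    · exact le_trans (min_le_right _ _) (h ▸ dist_wt_le_hd ν c)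

lemma perm_of_wt_eq {m : ℕ} {μ ν : Fin m → Fin 2} (h : wt μ = wt ν) :
    ∃ σ : Equiv.Perm (Fin m), (fun i => μ (σ⁻¹ i)) = ν := by
  obtain ⟨σ₁, h1⟩ := exists_perm μ
  obtain ⟨σ₂, h2⟩ := exists_perm ν
  refine ⟨(σ₂.trans σ₁.symm).symm, funext fun i => ?_⟩
  have : ((σ₂.trans σ₁.symm).symm : Equiv.Perm (Fin m))⁻¹ i = σ₁.symm (σ₂ i) := rfl
  rw [this, h1, Equiv.apply_symm_apply, h, ← h2]

lemma wt_flip {m : ℕ} (μ : Fin m → Fin 2) : wt (fun i => flipBit (μ i)) = m - wt μ := by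
  have : (Finset.univ.filter fun i : Fin m => flipBit (μ i) = 1)
      = (Finset.univ.filter fun i : Fin m => μ i = 1)ᶜ := by
    ext i
    simp only [Finset.mem_filter, Finset.mem_compl, Finset.mem_univ, true_and]
    rcases Fin.exists_fin_two.mp ⟨μ i, rfl⟩ with h | h <;> simp [flipBit, h]
  rw [wt, this, Finset.card_compl, Fintype.card_fin]
  rfl

end Stmt13

open Stmt13 in
theorem stmt_13 (m : ℕ) (hm : Odd m)
    (C : Set (Fin m → Fin 2))
    (hC : C = {α | wt α = (m - 1) / 2 ∨ wt α = (m + 1) / 2}) :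
    (∀ s : ℕ, 1 ≤ s → ∀ ν : Fin m → Fin 2, distToCode C ν = s ↔
      min (Nat.dist (wt ν) ((m - 1) / 2)) (Nat.dist (wt ν) ((m + 1) / 2)) = s) ∧
    (∀ s : ℕ, ∀ μ ν : Fin m → Fin 2, distToCode C μ = s → distToCode C ν = s →
      ∃ (σ : Equiv.Perm (Fin m)) (ε : Bool),
        (fun i => if ε then flipBit (μ (σ⁻¹ i)) else μ (σ⁻¹ i)) = ν) := by
  subst hC
  constructor
  · intro s _ ν
    rw [distToCode_eq hm]
  · intro s μ ν h1 h2
    rw [distToCode_eq hm] at h1 h2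
    obtain ⟨k, hk⟩ := hm
    have hμm := wt_le μ
    have hνm := wt_le ν
    have hcase : wt μ = wt ν ∨ wt μ + wt ν = m := by
      simp only [Nat.dist] at h1 h2
      omega
    rcases hcase with h | h
    · obtain ⟨σ, hσ⟩ := perm_of_wt_eq h
      exact ⟨σ, false, by simpa using hσ⟩
    · have hw : wt (fun i => flipBit (μ i)) = wt ν := by rw [wt_flip]; omega
      obtain ⟨σ, hσ⟩ := perm_of_wt_eq hw
      exact ⟨σ, true, by simpa using hσ⟩
end
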